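/- Fix K > 0 and let A_N⁰ : ℝ × ℝ → ℂ (N ∈ ℕ) be jointly measurable such that for every r ∈ ℝ and every N ∈ ℕ, the map μ ↦ A_N⁰(r, μ) is differentiable everywhere, and both μ ↦ A_N⁰(r, μ) and μ ↦ ∂_μ A_N⁰(r, μ) lie in L²(ℝ) with L²-norms at most K. Then for every t ∈ ℝ and every N ∈ ℕ, ∫_ℝ | ∫_ℝ e^{iμs} · A_N⁰(N(t + s/(2N)), μ) · conj( A_N⁰(N(t − s/(2N)), μ) ) dμ |² ds ≤ 10 K⁴. (The inner μ-integral converges absolutely by the Cauchy–Schwarz inequality.) -/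

import Mathlib

/-!
Write `W(s) = ∫ e^{iμs} f(μ) conj(g(μ)) dμ` with `f = A_N⁰(r₊, ·)`, `g = A_N⁰(r₋, ·)`,
`r± = N(t ± s/(2N))`.
Cauchy–Schwarz gives `|W(s)| ≤ K²` for every `s`. Integrating by parts against `e^{iμs}`
(the boundary terms vanish because `f conj g` and its derivative are integrable) gives
`s · W(s) = i ∫ e^{iμs} (f' conj g + f conj g') dμ`, hence `|s| |W(s)| ≤ 2K²`.
So `|W|²` is dominated by `K⁴` on `|s| ≤ 1` and by `4K⁴/s²` outside, whose integral is
`K⁴ (2 + 8) = 10 K⁴`.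
-/

open MeasureTheory Filter
open Set Complex
open scoped ComplexConjugate

section Holder

variable {α : Type*} [MeasurableSpace α] {μ : Measure α}

lemma lpNorm_le_of_eLpNorm_le_ofReal {E : Type*} [NormedAddCommGroup E] {f : α → E}
    {p : ENNReal} {K : ℝ} (hK : 0 ≤ K) (h : eLpNorm f p μ ≤ ENNReal.ofReal K) :
    lpNorm f p μ ≤ K := by
  rw [lpNorm]
  split_ifs
  exacts [ENNReal.toReal_le_of_le_ofReal hK h, hK]

variable {f g : α → ℂ}

lemma integral_norm_mul_le_lpNorm_mul_lpNorm {p q : ENNReal} [ENNReal.HolderTriple p q 1]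
    (hf : MemLp f p μ) (hg : MemLp g q μ) :
    ∫ x, ‖f x * g x‖ ∂μ ≤ lpNorm f p μ * lpNorm g q μ := by
  rw [← lpNorm_one_eq_integral_norm (f := fun x => f x * g x) (hf.1.mul hg.1),
    ← toReal_eLpNorm (f := fun x => f x * g x) (hf.1.mul hg.1), ← toReal_eLpNorm hf.1,
    ← toReal_eLpNorm hg.1, ← ENNReal.toReal_mul]
  refine ENNReal.toReal_mono (ENNReal.mul_ne_top hf.eLpNorm_ne_top hg.eLpNorm_ne_top) ?_
  simpa using eLpNorm_le_eLpNorm_mul_eLpNorm'_of_norm hf.1 hg.1 (· * ·) 1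
    (Eventually.of_forall fun x => by simp)

lemma integral_norm_mul_conj_le {K : ℝ} (hf : MemLp f 2 μ) (hfK : lpNorm f 2 μ ≤ K)
    (hg : MemLp g 2 μ) (hgK : lpNorm g 2 μ ≤ K) :
    ∫ x, ‖f x * conj (g x)‖ ∂μ ≤ K * K := by
  have hstar : lpNorm (star g) 2 μ = lpNorm g 2 μ := by
    rw [← toReal_eLpNorm hg.star.1, ← toReal_eLpNorm hg.1, eLpNorm_star]
  calc ∫ x, ‖f x * conj (g x)‖ ∂μ ≤ lpNorm f 2 μ * lpNorm (star g) 2 μ :=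
        integral_norm_mul_le_lpNorm_mul_lpNorm hf hg.star
    _ ≤ K * K := by
        rw [hstar]
        exact mul_le_mul hfK hgK lpNorm_nonneg (lpNorm_nonneg.trans hgK)

lemma integrable_mul_conj {p q : ENNReal} [ENNReal.HolderTriple p q 1]
    (hf : MemLp f p μ) (hg : MemLp g q μ) :
    Integrable (fun x => f x * conj (g x)) μ :=
  hf.integrable_mul hg.star

end Holder

section Fourier

lemma norm_exp_I_mul_ofReal_mul (μ s : ℝ) : ‖exp (I * μ * s)‖ = 1 := by
  rw [mul_assoc, ← ofReal_mul, norm_exp_I_mul_ofReal]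

variable {h h' : ℝ → ℂ}

lemma norm_integral_exp_mul_le (s : ℝ) :
    ‖∫ μ : ℝ, exp (I * μ * s) * h μ‖ ≤ ∫ μ : ℝ, ‖h μ‖ :=
  (norm_integral_le_integral_norm _).trans_eq <| integral_congr_ae <|
    Eventually.of_forall fun μ => by simp only [norm_mul, norm_exp_I_mul_ofReal_mul, one_mul]

lemma integrable_exp_I_mul_mul (s : ℝ) (hh : Integrable h) :
    Integrable (fun μ : ℝ => exp (I * μ * s) * h μ) :=
  hh.bdd_mul (c := 1) (by fun_prop)
    (Eventually.of_forall fun μ => (norm_exp_I_mul_ofReal_mul μ s).le)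

lemma integral_exp_mul_deriv_eq (s : ℝ) (hderiv : ∀ μ, HasDerivAt h (h' μ) μ)
    (hh : Integrable h) (hh' : Integrable h') :
    ∫ μ : ℝ, exp (I * μ * s) * h' μ = -(I * s * ∫ μ : ℝ, exp (I * μ * s) * h μ) := by
  have hprod : ∀ μ : ℝ, HasDerivAt (fun μ : ℝ => exp (I * μ * s) * h μ)
      (I * s * (exp (I * μ * s) * h μ) + exp (I * μ * s) * h' μ) μ := by
    intro μ
    have hlin : HasDerivAt (fun μ : ℝ => I * μ * s) (I * s) μ := by
      simpa using ((hasDerivAt_id μ).ofReal_comp.const_mul I).mul_const (s : ℂ)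
    exact (hlin.cexp.mul (hderiv μ)).congr_deriv (by ring)
  have hint := integrable_exp_I_mul_mul s hh
  have hint' := integrable_exp_I_mul_mul s hh'
  have hzero := integral_eq_zero_of_hasDerivAt_of_integrable hprod
    ((hint.const_mul _).add hint') hint
  rw [integral_add (hint.const_mul _) hint', integral_const_mul] at hzero
  linear_combination hzero

end Fourier

noncomputable def tailWeight (s : ℝ) : ℝ := if |s| ≤ 1 then 1 else 4 / s ^ 2

lemma tailWeight_nonneg (s : ℝ) : 0 ≤ tailWeight s := by
  unfold tailWeight; split_ifs <;> positivity

lemma tailWeight_le (s : ℝ) : tailWeight s ≤ 8 * (1 + s ^ 2)⁻¹ := by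
  rw [← div_eq_mul_inv, le_div_iff₀ (by positivity)]
  unfold tailWeight
  split_ifs with hs
  · nlinarith [sq_abs s, abs_nonneg s]
  · have hs2 : 1 < s ^ 2 := by nlinarith [sq_abs s, abs_nonneg s]
    rw [div_mul_eq_mul_div, div_le_iff₀ (by positivity)]
    nlinarith

lemma integrable_tailWeight : Integrable tailWeight := by
  refine (integrable_inv_one_add_sq.const_mul 8).mono' ?_ (.of_forall fun s => ?_)
  · exact (Measurable.ite (measurableSet_le measurable_abs measurable_const) measurable_const
      (by fun_prop)).aestronglyMeasurable
  · rw [Real.norm_of_nonneg (tailWeight_nonneg s)]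
    exact tailWeight_le s

lemma integral_Ioi_one_div_sq (c : ℝ) : ∫ r in Ioi (1 : ℝ), c / r ^ 2 = c := by
  calc ∫ r in Ioi (1 : ℝ), c / r ^ 2 = ∫ r in Ioi (1 : ℝ), c * r ^ (-2 : ℝ) :=
        setIntegral_congr_fun measurableSet_Ioi fun r hr => by
          rw [Real.rpow_neg (zero_le_one.trans (le_of_lt hr)), Real.rpow_two, div_eq_mul_inv]
    _ = c := by
        rw [integral_const_mul, integral_Ioi_rpow_of_lt (by norm_num) one_pos]
        norm_num

lemma integral_tailWeight : ∫ s, tailWeight s = 10 := by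
  set w : ℝ → ℝ := fun r => if r ≤ 1 then 1 else 4 / r ^ 2
  have hw : tailWeight = fun s => w |s| := funext fun s => by simp [tailWeight, w, sq_abs]
  have hwIoi : IntegrableOn w (Ioi 0) := by
    refine integrable_tailWeight.integrableOn.congr_fun (fun r hr => ?_) measurableSet_Ioi
    simp [hw, abs_of_pos (mem_Ioi.mp hr)]
  have hsplit := setIntegral_union (Ioc_disjoint_Ioi le_rfl) measurableSet_Ioi
    (hwIoi.mono_set Ioc_subset_Ioi_self) (hwIoi.mono_set (Ioi_subset_Ioi zero_le_one))
  rw [Ioc_union_Ioi_eq_Ioi zero_le_one] at hsplit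
  have hnear : ∫ r in Ioc (0 : ℝ) 1, w r = 1 := by
    rw [setIntegral_congr_fun measurableSet_Ioc (g := fun _ => 1) fun r hr => if_pos hr.2]
    simp
  have hfar : ∫ r in Ioi (1 : ℝ), w r = 4 := by
    rw [setIntegral_congr_fun measurableSet_Ioi (g := fun r => 4 / r ^ 2)
      fun r hr => if_neg (not_le.mpr hr)]
    exact integral_Ioi_one_div_sq 4
  rw [hw, integral_comp_abs, hsplit, hnear, hfar]
  norm_num

section CrossAmbiguity

variable {f g : ℝ → ℂ} {K : ℝ}

lemma norm_integral_exp_mul_conj_le (hf : MemLp f 2 volume) (hfK : lpNorm f 2 volume ≤ K)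
    (hg : MemLp g 2 volume) (hgK : lpNorm g 2 volume ≤ K) (s : ℝ) :
    ‖∫ μ : ℝ, exp (I * μ * s) * (f μ * conj (g μ))‖ ≤ K * K :=
  (norm_integral_exp_mul_le s).trans (integral_norm_mul_conj_le hf hfK hg hgK)

lemma abs_mul_norm_integral_exp_mul_conj_le (hfd : Differentiable ℝ f)
    (hgd : Differentiable ℝ g) (hf : MemLp f 2 volume) (hfK : lpNorm f 2 volume ≤ K)
    (hg : MemLp g 2 volume) (hgK : lpNorm g 2 volume ≤ K) (hf' : MemLp (deriv f) 2 volume)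
    (hf'K : lpNorm (deriv f) 2 volume ≤ K) (hg' : MemLp (deriv g) 2 volume)
    (hg'K : lpNorm (deriv g) 2 volume ≤ K) (s : ℝ) :
    |s| * ‖∫ μ : ℝ, exp (I * μ * s) * (f μ * conj (g μ))‖ ≤ 2 * (K * K) := by
  have hderiv : ∀ μ, HasDerivAt (fun μ => f μ * conj (g μ))
      (deriv f μ * conj (g μ) + f μ * conj (deriv g μ)) μ :=
    fun μ => (hfd μ).hasDerivAt.mul (hgd μ).hasDerivAt.star
  have hint₁ := integrable_mul_conj hf' hg
  have hint₂ := integrable_mul_conj hf hg'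
  have hibp := integral_exp_mul_deriv_eq s hderiv (integrable_mul_conj hf hg) (hint₁.add hint₂)
  calc |s| * ‖∫ μ : ℝ, exp (I * μ * s) * (f μ * conj (g μ))‖
      = ‖∫ μ : ℝ, exp (I * μ * s) * (deriv f μ * conj (g μ) + f μ * conj (deriv g μ))‖ := by
        rw [hibp, norm_neg, norm_mul, norm_mul, norm_I, one_mul, norm_real, Real.norm_eq_abs]
    _ ≤ ∫ μ : ℝ, ‖deriv f μ * conj (g μ) + f μ * conj (deriv g μ)‖ :=
        norm_integral_exp_mul_le s
    _ ≤ ∫ μ : ℝ, (‖deriv f μ * conj (g μ)‖ + ‖f μ * conj (deriv g μ)‖) :=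
        integral_mono (hint₁.add hint₂).norm (hint₁.norm.add hint₂.norm) fun μ => norm_add_le _ _
    _ ≤ K * K + K * K := by
        rw [integral_add hint₁.norm hint₂.norm]
        exact add_le_add (integral_norm_mul_conj_le hf' hf'K hg hgK)
          (integral_norm_mul_conj_le hf hfK hg' hg'K)
    _ = 2 * (K * K) := by ring

lemma sq_norm_integral_exp_mul_conj_le (hfd : Differentiable ℝ f)
    (hgd : Differentiable ℝ g) (hf : MemLp f 2 volume) (hfK : lpNorm f 2 volume ≤ K)
    (hg : MemLp g 2 volume) (hgK : lpNorm g 2 volume ≤ K) (hf' : MemLp (deriv f) 2 volume)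
    (hf'K : lpNorm (deriv f) 2 volume ≤ K) (hg' : MemLp (deriv g) 2 volume)
    (hg'K : lpNorm (deriv g) 2 volume ≤ K) (s : ℝ) :
    ‖∫ μ : ℝ, exp (I * μ * s) * (f μ * conj (g μ))‖ ^ 2 ≤ K ^ 4 * tailWeight s := by
  set v := ‖∫ μ : ℝ, exp (I * μ * s) * (f μ * conj (g μ))‖
  unfold tailWeight
  split_ifs with hs
  · have hv : v ≤ K * K := norm_integral_exp_mul_conj_le hf hfK hg hgK s
    calc v ^ 2 ≤ (K * K) ^ 2 := pow_le_pow_left₀ (norm_nonneg _) hv 2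
      _ = K ^ 4 * 1 := by ring
  · have hv : |s| * v ≤ 2 * (K * K) :=
      abs_mul_norm_integral_exp_mul_conj_le hfd hgd hf hfK hg hgK hf' hf'K hg' hg'K s
    have hs2 : 0 < s ^ 2 := by nlinarith [sq_abs s, abs_nonneg s]
    rw [mul_div_assoc', le_div_iff₀ hs2, ← sq_abs s, ← mul_pow, mul_comm v]
    calc (|s| * v) ^ 2 ≤ (2 * (K * K)) ^ 2 := pow_le_pow_left₀ (by positivity) hv 2
      _ = K ^ 4 * 4 := by ring

end CrossAmbiguity

theorem wigner_ville_spectrum_apriori_bound_general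
    (K : ℝ) (hK : 0 < K)
    (A0 : ℕ → ℝ → ℝ → ℂ)
    (hdiff : ∀ (r : ℝ) (N : ℕ), 1 ≤ N → ∀ μ : ℝ, DifferentiableAt ℝ (A0 N r) μ)
    (hL2 : ∀ (r : ℝ) (N : ℕ), 1 ≤ N → MemLp (A0 N r) 2 (volume : Measure ℝ) ∧
      eLpNorm (A0 N r) 2 (volume : Measure ℝ) ≤ ENNReal.ofReal K)
    (hderivL2 : ∀ (r : ℝ) (N : ℕ), 1 ≤ N →
      MemLp (deriv (A0 N r)) 2 (volume : Measure ℝ) ∧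
        eLpNorm (deriv (A0 N r)) 2 (volume : Measure ℝ) ≤ ENNReal.ofReal K) :
    ∀ (t : ℝ) (N : ℕ), 1 ≤ N →
      (∫ s : ℝ, ‖∫ μ : ℝ, Complex.exp (Complex.I * μ * s) *
          (A0 N ((N : ℝ) * (t + s / (2 * (N : ℝ)))) μ *
            (starRingEnd ℂ) (A0 N ((N : ℝ) * (t - s / (2 * (N : ℝ)))) μ))‖ ^ 2) ≤
        10 * K ^ 4 := by
  intro t N hN
  have hA r := lpNorm_le_of_eLpNorm_le_ofReal hK.le (hL2 r N hN).2
  have hA' r := lpNorm_le_of_eLpNorm_le_ofReal hK.le (hderivL2 r N hN).2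
  calc _ ≤ ∫ s : ℝ, K ^ 4 * tailWeight s :=
        integral_mono_of_nonneg (.of_forall fun s => by positivity)
          (integrable_tailWeight.const_mul _) (.of_forall fun s =>
            sq_norm_integral_exp_mul_conj_le (hdiff _ N hN) (hdiff _ N hN)
              (hL2 _ N hN).1 (hA _) (hL2 _ N hN).1 (hA _)
              (hderivL2 _ N hN).1 (hA' _) (hderivL2 _ N hN).1 (hA' _) s)
    _ = 10 * K ^ 4 := by rw [integral_const_mul, integral_tailWeight, mul_comm]

/-- A priori bound from the proof of Theorem 5.2: if the transfer functions `A_N⁰(r,·)` and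
their derivatives lie in `L²(ℝ)` with norms at most `K`, then the squared `L²`-norm (in `s`) of
the inner Fourier integrals is bounded by `10 K⁴`. -/
theorem wigner_ville_spectrum_apriori_bound
    (K : ℝ) (hK : 0 < K)
    (A0 : ℕ → ℝ → ℝ → ℂ)
    (hmeas : ∀ N : ℕ, Measurable (Function.uncurry (A0 N)))
    (hdiff : ∀ (r : ℝ) (N : ℕ), 1 ≤ N → ∀ μ : ℝ, DifferentiableAt ℝ (A0 N r) μ)
    (hL2 : ∀ (r : ℝ) (N : ℕ), 1 ≤ N → MemLp (A0 N r) 2 (volume : Measure ℝ) ∧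
      eLpNorm (A0 N r) 2 (volume : Measure ℝ) ≤ ENNReal.ofReal K)
    (hderivL2 : ∀ (r : ℝ) (N : ℕ), 1 ≤ N →
      MemLp (deriv (A0 N r)) 2 (volume : Measure ℝ) ∧
        eLpNorm (deriv (A0 N r)) 2 (volume : Measure ℝ) ≤ ENNReal.ofReal K) :
    ∀ (t : ℝ) (N : ℕ), 1 ≤ N →
      (∫ s : ℝ, ‖∫ μ : ℝ, Complex.exp (Complex.I * μ * s) *
          (A0 N ((N : ℝ) * (t + s / (2 * (N : ℝ)))) μ *
            (starRingEnd ℂ) (A0 N ((N : ℝ) * (t - s / (2 * (N : ℝ)))) μ))‖ ^ 2) ≤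
        10 * K ^ 4 :=
  wigner_ville_spectrum_apriori_bound_general K hK A0 hdiff hL2 hderivL2
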